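/- The integral ∫₀^∞ sin⁵(x)/x³ dx equals 5π/32. -/

import Mathlib

/-!
Since `x⁻³ = ½ ∫₀^∞ t² e^{-xt} dt` and `sin⁵ x / x³` is absolutely integrable, Fubini turns the
integral into `½ ∫₀^∞ t² L(t) dt`, where `L` is the Laplace transform of `sin⁵`. From
`sin⁵ x = (10 sin x - 5 sin 3x + sin 5x) / 16` and `∫₀^∞ e^{-tx} sin kx dx = k / (t² + k²)`,
`t² L(t)` is a combination of the `(t² + k²)⁻¹`, whose integrals are `π / (2k)`.
-/

open Real MeasureTheory Set Nat

lemma integral_pow_mul_exp_neg_mul_Ioi (n : ℕ) {r : ℝ} (hr : 0 < r) :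
    ∫ t in Ioi 0, t ^ n * exp (-(r * t)) = n ! / r ^ (n + 1) := by
  have h := integral_rpow_mul_exp_neg_mul_Ioi (a := n + 1) (by positivity) hr
  rw [add_sub_cancel_right, Gamma_nat_eq_factorial, ← Nat.cast_succ, Real.rpow_natCast] at h
  simp_rw [Real.rpow_natCast] at h
  rw [h, one_div, inv_pow, inv_mul_eq_div]

lemma integrableOn_pow_mul_exp_neg_mul_Ioi (n : ℕ) {r : ℝ} (hr : 0 < r) :
    IntegrableOn (fun t => t ^ n * exp (-(r * t))) (Ioi 0) :=
  Integrable.of_integral_ne_zero <| by rw [integral_pow_mul_exp_neg_mul_Ioi n hr]; positivity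

lemma integral_Ioi_div_pow_succ_eq_integral_laplace {f : ℝ → ℝ} (n : ℕ)
    (hf : IntegrableOn (fun x => f x / x ^ (n + 1)) (Ioi 0)) :
    ∫ x in Ioi 0, f x / x ^ (n + 1)
      = (∫ t in Ioi 0, t ^ n * ∫ x in Ioi 0, exp (-(t * x)) * f x) / n ! := by
  set μ := volume.restrict (Ioi (0 : ℝ))
  set F : ℝ → ℝ → ℝ := fun x t => f x * (t ^ n * exp (-(x * t))) with hF
  have hkernel {x : ℝ} (hx : 0 < x) (c : ℝ) :
      ∫ t in Ioi 0, c * (t ^ n * exp (-(x * t))) = n ! * (c / x ^ (n + 1)) := by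
    rw [integral_const_mul, integral_pow_mul_exp_neg_mul_Ioi n hx]
    ring
  have hf_meas : AEStronglyMeasurable f μ := by
    refine (hf.aestronglyMeasurable.mul (continuous_pow (n + 1)).aestronglyMeasurable).congr ?_
    refine (ae_restrict_iff' measurableSet_Ioi).2 (ae_of_all _ fun x (hx : 0 < x) => ?_)
    exact div_mul_cancel₀ _ (pow_ne_zero _ hx.ne')
  have hF_meas : AEStronglyMeasurable (Function.uncurry F) (μ.prod μ) :=
    hf_meas.comp_fst.mul (Continuous.aestronglyMeasurable (by fun_prop))
  have hF_int : Integrable (Function.uncurry F) (μ.prod μ) := by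
    refine (integrable_prod_iff hF_meas).2 ⟨?_, ?_⟩
    · refine (ae_restrict_iff' measurableSet_Ioi).2 (ae_of_all _ fun x (hx : 0 < x) => ?_)
      exact (integrableOn_pow_mul_exp_neg_mul_Ioi n hx).const_mul (f x)
    · refine (hf.norm.const_mul n !).congr ?_
      refine (ae_restrict_iff' measurableSet_Ioi).2 (ae_of_all _ fun x (hx : 0 < x) => ?_)
      calc n ! * ‖f x / x ^ (n + 1)‖ = ∫ t in Ioi 0, ‖f x‖ * (t ^ n * exp (-(x * t))) := by
            rw [hkernel hx, norm_div, norm_pow, Real.norm_of_nonneg hx.le]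
        _ = ∫ t in Ioi 0, ‖Function.uncurry F (x, t)‖ :=
            setIntegral_congr_fun measurableSet_Ioi fun t (ht : 0 < t) => by
              simp [hF, abs_of_pos ht]
  calc ∫ x in Ioi 0, f x / x ^ (n + 1)
      = (∫ x in Ioi 0, ∫ t in Ioi 0, F x t) / n ! := by
        rw [← integral_div]
        refine setIntegral_congr_fun measurableSet_Ioi fun x (hx : 0 < x) => ?_
        rw [hF, hkernel hx]
        field_simp
    _ = (∫ t in Ioi 0, ∫ x in Ioi 0, F x t) / n ! := by rw [integral_integral_swap hF_int]
    _ = (∫ t in Ioi 0, t ^ n * ∫ x in Ioi 0, exp (-(t * x)) * f x) / n ! := by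
        simp_rw [hF, ← integral_const_mul]
        congr! 4 with t
        ext x
        rw [mul_comm x t]
        ring

lemma integrableOn_Ioi_sin_pow_div_pow {m n : ℕ} (hn : 2 ≤ n) (hnm : n ≤ m) :
    IntegrableOn (fun x => sin x ^ m / x ^ n) (Ioi 0) := by
  refine (integrable_inv_one_add_sq.const_mul 2).integrableOn.mono'
    (by fun_prop : Measurable fun x => sin x ^ m / x ^ n).aestronglyMeasurable ?_
  refine (ae_restrict_iff' measurableSet_Ioi).2 (ae_of_all _ fun x (hx : 0 < x) => ?_)
  rw [norm_div, norm_pow, norm_pow, Real.norm_eq_abs, Real.norm_of_nonneg hx.le, ← div_eq_mul_inv,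
    le_div_iff₀ (by positivity)]
  rcases le_total x 1 with hx1 | hx1
  · have hsin : |sin x| ^ m ≤ x ^ n :=
      (pow_le_pow_left₀ (abs_nonneg _) (abs_sin_le_abs.trans (abs_of_pos hx).le) m).trans
        (pow_le_pow_of_le_one hx.le hx1 hnm)
    calc |sin x| ^ m / x ^ n * (1 + x ^ 2) ≤ 1 * (1 + x ^ 2) := by
          gcongr
          exact div_le_one_of_le₀ hsin (by positivity)
      _ ≤ 2 := by nlinarith
  · have hsin : |sin x| ^ m / x ^ n ≤ 1 / x ^ 2 :=
      div_le_div₀ zero_le_one (pow_le_one₀ (abs_nonneg _) (abs_sin_le_one _)) (by positivity)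
        (pow_le_pow_right₀ hx1 hn)
    calc |sin x| ^ m / x ^ n * (1 + x ^ 2) ≤ 1 / x ^ 2 * (1 + x ^ 2) := by gcongr
      _ = 1 / x ^ 2 + 1 := by field_simp
      _ ≤ 2 := by linarith [div_le_one_of_le₀ (one_le_pow₀ (n := 2) hx1) (by positivity)]

section LaplaceSin

variable {t : ℝ} (k : ℝ)

lemma exp_neg_mul_mul_sin_mul_eq_im (x : ℝ) :
    exp (-(t * x)) * sin (k * x) = (Complex.exp ((-t + k * Complex.I) * x)).im := by
  simp [Complex.exp_im]

lemma integrableOn_exp_neg_mul_mul_sin_mul (ht : 0 < t) :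
    IntegrableOn (fun x => exp (-(t * x)) * sin (k * x)) (Ioi 0) := by
  simp_rw [exp_neg_mul_mul_sin_mul_eq_im]
  exact (integrableOn_exp_mul_complex_Ioi (by simp [ht]) 0).im

lemma integral_exp_neg_mul_mul_sin_mul (ht : 0 < t) :
    ∫ x in Ioi 0, exp (-(t * x)) * sin (k * x) = k / (t ^ 2 + k ^ 2) := by
  simp_rw [exp_neg_mul_mul_sin_mul_eq_im]
  have ha : (-t + k * Complex.I).re < 0 := by simpa
  have h := integral_im (integrableOn_exp_mul_complex_Ioi ha 0)
  simp only [RCLike.im_to_complex] at h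
  rw [h, integral_exp_mul_complex_Ioi ha 0]
  simp [Complex.div_im, Complex.normSq]
  field_simp

lemma sin_pow_five (x : ℝ) :
    sin x ^ 5 = (10 * sin x - 5 * sin (3 * x) + sin (5 * x)) / 16 := by
  rw [show 5 * x = 3 * x + 2 * x by ring, sin_add, sin_three_mul, cos_three_mul, sin_two_mul,
    cos_two_mul]
  linear_combination (sin x ^ 3 - sin x / 2 - sin x * cos x ^ 2 / 2) * sin_sq_add_cos_sq x

lemma integral_exp_neg_mul_mul_sin_pow_five (ht : 0 < t) :
    ∫ x in Ioi 0, exp (-(t * x)) * sin x ^ 5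
      = (10 / (t ^ 2 + 1) - 15 / (t ^ 2 + 9) + 5 / (t ^ 2 + 25)) / 16 := by
  have hsin (x : ℝ) : exp (-(t * x)) * sin x ^ 5 = (10 * (exp (-(t * x)) * sin (1 * x))
      - 5 * (exp (-(t * x)) * sin (3 * x)) + exp (-(t * x)) * sin (5 * x)) / 16 := by
    rw [sin_pow_five, one_mul]
    ring
  have i1 := (integrableOn_exp_neg_mul_mul_sin_mul 1 ht).const_mul 10
  have i3 := (integrableOn_exp_neg_mul_mul_sin_mul 3 ht).const_mul 5
  have i5 := integrableOn_exp_neg_mul_mul_sin_mul 5 ht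
  have i13 : IntegrableOn (fun x => 10 * (exp (-(t * x)) * sin (1 * x))
      - 5 * (exp (-(t * x)) * sin (3 * x))) (Ioi 0) := i1.sub i3
  simp_rw [hsin]
  rw [integral_div, integral_add i13 i5, integral_sub i1 i3, integral_const_mul,
    integral_const_mul, integral_exp_neg_mul_mul_sin_mul 1 ht,
    integral_exp_neg_mul_mul_sin_mul 3 ht, integral_exp_neg_mul_mul_sin_mul 5 ht]
  ring

end LaplaceSin

lemma integral_Ioi_inv_sq_add_sq {a : ℝ} (ha : 0 < a) :
    ∫ t in Ioi 0, (a ^ 2 + t ^ 2)⁻¹ = π / (2 * a) := by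
  have h := integral_comp_mul_left_Ioi (fun u => (1 + u ^ 2)⁻¹) 0 (inv_pos.2 ha)
  rw [mul_zero, integral_Ioi_inv_one_add_sq, arctan_zero, sub_zero, inv_inv, smul_eq_mul] at h
  have hscale (t : ℝ) : (a ^ 2 + t ^ 2)⁻¹ = (a ^ 2)⁻¹ * (1 + (a⁻¹ * t) ^ 2)⁻¹ := by
    field_simp
  simp_rw [hscale]
  rw [integral_const_mul, h]
  field_simp

lemma integrableOn_Ioi_inv_sq_add_sq {a : ℝ} (ha : 0 < a) :
    IntegrableOn (fun t => (a ^ 2 + t ^ 2)⁻¹) (Ioi 0) :=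
  Integrable.of_integral_ne_zero <| by rw [integral_Ioi_inv_sq_add_sq ha]; positivity

lemma integral_Ioi_sq_mul_laplace_sin_pow_five :
    ∫ t in Ioi 0, t ^ 2 * ((10 / (t ^ 2 + 1) - 15 / (t ^ 2 + 9) + 5 / (t ^ 2 + 25)) / 16)
      = 5 * π / 16 := by
  -- `t² · k / (t² + k²) = k - k³ / (t² + k²)`, and the constant terms cancel: `10 - 15 + 5 = 0`.
  have hpf (t : ℝ) : t ^ 2 * ((10 / (t ^ 2 + 1) - 15 / (t ^ 2 + 9) + 5 / (t ^ 2 + 25)) / 16)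
      = (135 * (3 ^ 2 + t ^ 2)⁻¹ - 10 * (1 ^ 2 + t ^ 2)⁻¹ - 125 * (5 ^ 2 + t ^ 2)⁻¹) / 16 := by
    field_simp
    ring
  have i1 := (integrableOn_Ioi_inv_sq_add_sq one_pos).const_mul 10
  have i3 := (integrableOn_Ioi_inv_sq_add_sq (by norm_num : (0 : ℝ) < 3)).const_mul 135
  have i5 := (integrableOn_Ioi_inv_sq_add_sq (by norm_num : (0 : ℝ) < 5)).const_mul 125
  have i31 : IntegrableOn (fun t : ℝ => 135 * (3 ^ 2 + t ^ 2)⁻¹ - 10 * (1 ^ 2 + t ^ 2)⁻¹)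
      (Ioi 0) := i3.sub i1
  simp_rw [hpf]
  rw [integral_div, integral_sub i31 i5, integral_sub i3 i1, integral_const_mul,
    integral_const_mul, integral_const_mul, integral_Ioi_inv_sq_add_sq one_pos,
    integral_Ioi_inv_sq_add_sq (by norm_num), integral_Ioi_inv_sq_add_sq (by norm_num)]
  ring

/-- ∫₀^∞ sin⁵x/x³ dx = 5π/32. -/
theorem sin_pow_five_div_cube_integral :
    ∫ x in Set.Ioi (0:ℝ), Real.sin x ^ 5 / x ^ 3 = 5 * π / 32 := by
  calc ∫ x in Ioi 0, sin x ^ 5 / x ^ 3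
      = (∫ t in Ioi 0, t ^ 2 * ∫ x in Ioi 0, exp (-(t * x)) * sin x ^ 5) / 2 ! :=
        integral_Ioi_div_pow_succ_eq_integral_laplace 2
          (integrableOn_Ioi_sin_pow_div_pow (m := 5) (by norm_num) (by norm_num))
    _ = (∫ t in Ioi 0,
          t ^ 2 * ((10 / (t ^ 2 + 1) - 15 / (t ^ 2 + 9) + 5 / (t ^ 2 + 25)) / 16)) / 2 := by
        rw [setIntegral_congr_fun measurableSet_Ioi fun t (ht : 0 < t) => by
          rw [integral_exp_neg_mul_mul_sin_pow_five ht]]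
        norm_num [Nat.factorial]
    _ = 5 * π / 32 := by
        rw [integral_Ioi_sq_mul_laplace_sin_pow_five]
        ring
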